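/- arXiv:1103.4579 — 2 statements merged into one kernel-verified Lean document; each statement's English description precedes it below -/
import Mathlib

section
/- Let d be a squarefree negative integer with d ∉ {-1, -2, -3, -7, -11, -15}. Then every element x of O_{ℚ(√d)} with norm x·conj(x) ≤ 4 is a rational integer, so x ∈ {0, 1, −1, 2, −2}; consequently, every cyclotomic Hermitian matrix with entries in O_{ℚ(√d)} is a symmetric matrix with all entries in {0, 1, −1, 2, −2} ⊆ ℤ. -/
open Polynomial

/-- For squarefree `d < 0`, a generator over `ℤ` of the ring of integers of `ℚ(√d)`,
viewed inside `ℂ`: it is `(1+√d)/2` if `d ≡ 1 (mod 4)` and `√d` otherwise,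
where `√d = i·√(-d)`. -/
noncomputable def quadOmega (d : ℤ) : ℂ :=
  if d % 4 = 1 then (1 + Complex.I * Real.sqrt (-d)) / 2 else Complex.I * Real.sqrt (-d)

/-- Membership in the ring of integers `O_{ℚ(√d)} ⊆ ℂ`. -/
def InIntRing (d : ℤ) (x : ℂ) : Prop :=
  ∃ a b : ℤ, x = (a : ℂ) + (b : ℂ) * quadOmega d

/-- A matrix is cyclotomic if all of its eigenvalues are real and lie in `[-2, 2]`. -/
def IsCycloMat {n : ℕ} (A : Matrix (Fin n) (Fin n) ℂ) : Prop :=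
  ∀ μ ∈ spectrum ℂ A, ∃ t : ℝ, μ = (t : ℂ) ∧ -2 ≤ t ∧ t ≤ 2

/-- The Mahler measure of a complex polynomial: the product of `max 1 |α|`
over its roots `α`, with multiplicity. -/
noncomputable def mahlerMeasurePoly (P : Polynomial ℂ) : ℝ :=
  (P.roots.map fun z => max 1 ‖z‖).prod

/-- The associated reciprocal polynomial `z^n · g(z + 1/z)` of a polynomial `g`
of degree `n`, using `z^n (z+1/z)^k = z^(n-k) (z²+1)^k`. -/
noncomputable def assocRecip (n : ℕ) (g : Polynomial ℂ) : Polynomial ℂ :=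
  ∑ k ∈ Finset.range (n + 1), Polynomial.C (g.coeff k) * X ^ (n - k) * (X ^ 2 + 1) ^ k

/-- The Mahler measure of an `n × n` matrix: the Mahler measure of the associated
reciprocal polynomial of its characteristic polynomial. -/
noncomputable def mahlerMat {n : ℕ} (A : Matrix (Fin n) (Fin n) ℂ) : ℝ :=
  mahlerMeasurePoly (assocRecip n A.charpoly)

/-- Lehmer's polynomial `z^10 + z^9 - z^7 - z^6 - z^5 - z^4 - z^3 + z + 1`. -/
noncomputable def lehmerPolyC : Polynomial ℂ :=
  X ^ 10 + X ^ 9 - X ^ 7 - X ^ 6 - X ^ 5 - X ^ 4 - X ^ 3 + X + 1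

/-- Lehmer's number `λ₀ = 1.17628...`, the Mahler measure of Lehmer's polynomial. -/
noncomputable def lehmerNumber : ℝ := mahlerMeasurePoly lehmerPolyC

/-- A Hermitian matrix is indecomposable if the graph on its index set with an edge
between `i ≠ j` whenever `A i j ≠ 0` is connected. -/
def Indecomposable {n : ℕ} (A : Matrix (Fin n) (Fin n) ℂ) : Prop :=
  (SimpleGraph.fromRel fun i j => A i j ≠ 0).Connected

/-- `A` is minimal noncyclotomic if it is indecomposable and noncyclotomic while every
proper principal submatrix of `A` is cyclotomic. -/
def MinimalNoncyclotomic {n : ℕ} (A : Matrix (Fin n) (Fin n) ℂ) : Prop :=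
  Indecomposable A ∧ ¬ IsCycloMat A ∧
    ∀ (m : ℕ), m < n → ∀ e : Fin m ↪ Fin n, IsCycloMat (A.submatrix e e)

/-- An `L'`-matrix over `O_{ℚ(√d)}`: a Hermitian matrix with entries in the ring of
integers, diagonal entries in `{0, 1, -1}`, and off-diagonal entries of norm at most 2. -/
def IsLpMat (d : ℤ) {n : ℕ} (A : Matrix (Fin n) (Fin n) ℂ) : Prop :=
  A.IsHermitian ∧ (∀ i j, InIntRing d (A i j)) ∧
    (∀ i, A i i ∈ ({0, 1, -1} : Set ℂ)) ∧
    ∀ i j, i ≠ j → Complex.normSq (A i j) ≤ 2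

/-- An `L`-matrix over `O_{ℚ(√d)}`: a Hermitian matrix with entries in the ring of
integers, diagonal entries in `{0, 1, -1}`, and off-diagonal entries of norm at most 4. -/
def IsLMat (d : ℤ) {n : ℕ} (A : Matrix (Fin n) (Fin n) ℂ) : Prop :=
  A.IsHermitian ∧ (∀ i j, InIntRing d (A i j)) ∧
    (∀ i, A i i ∈ ({0, 1, -1} : Set ℂ)) ∧
    ∀ i j, i ≠ j → Complex.normSq (A i j) ≤ 4

/-!
An element `a + b ω` of `O_{ℚ(√d)}` with `b ≠ 0` has norm at least `|d|/4`, and at least `|d|`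
when `d ≢ 1 (mod 4)`; outside the excluded values (and `d = -4`, which is not squarefree)
this exceeds `4`, so elements of norm at most `4` are rational integers. For the matrices,
the entries of a Hermitian matrix are bounded by its `ℓ²` operator norm, which for a
self-adjoint element of a C⋆-algebra equals the spectral radius, here at most `2`.
-/

open scoped Matrix.Norms.L2Operator

theorem four_mul_normSq_add_mul_quadOmega_of_emod_four_eq_one {d : ℤ} (hd : d ≤ 0)
    (h : d % 4 = 1) (a b : ℤ) :
    4 * Complex.normSq (a + b * quadOmega d) = (2 * a + b) ^ 2 + b ^ 2 * (-d : ℝ) := by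
  have hs : Real.sqrt (-d) ^ 2 = (-d : ℝ) := Real.sq_sqrt (by exact_mod_cast neg_nonneg.mpr hd)
  rw [quadOmega, if_pos h, Complex.normSq_apply]
  simp only [Complex.add_re, Complex.add_im, Complex.mul_re, Complex.mul_im, Complex.div_ofNat_re,
    Complex.div_ofNat_im, Complex.intCast_re, Complex.intCast_im, Complex.one_re, Complex.one_im,
    Complex.I_re, Complex.I_im, Complex.ofReal_re, Complex.ofReal_im]
  linear_combination (b : ℝ) ^ 2 * hs

theorem normSq_add_mul_quadOmega_of_emod_four_ne_one {d : ℤ} (hd : d ≤ 0)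
    (h : d % 4 ≠ 1) (a b : ℤ) :
    Complex.normSq (a + b * quadOmega d) = a ^ 2 + b ^ 2 * (-d : ℝ) := by
  have hs : Real.sqrt (-d) ^ 2 = (-d : ℝ) := Real.sq_sqrt (by exact_mod_cast neg_nonneg.mpr hd)
  rw [quadOmega, if_neg h, Complex.normSq_apply]
  simp only [Complex.add_re, Complex.add_im, Complex.mul_re, Complex.mul_im,
    Complex.intCast_re, Complex.intCast_im,
    Complex.I_re, Complex.I_im, Complex.ofReal_re, Complex.ofReal_im]
  linear_combination (b : ℝ) ^ 2 * hs

theorem four_lt_normSq_add_mul_quadOmega {d : ℤ} (hd : d < 0) (hsf : Squarefree d)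
    (hne : d ∉ ({-1, -2, -3, -7, -11, -15} : Set ℤ)) (a : ℤ) {b : ℤ} (hb : b ≠ 0) :
    4 < Complex.normSq (a + b * quadOmega d) := by
  simp only [Set.mem_insert_iff, Set.mem_singleton_iff, not_or] at hne
  have hb2 : (1 : ℝ) ≤ (b : ℝ) ^ 2 :=
    mod_cast (one_le_sq_iff_one_le_abs _).mpr (Int.one_le_abs hb)
  by_cases h : d % 4 = 1
  · have hd19 : (19 : ℝ) ≤ -d := by exact_mod_cast (by omega : 19 ≤ -d)
    have := four_mul_normSq_add_mul_quadOmega_of_emod_four_eq_one hd.le h a b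
    nlinarith [sq_nonneg (2 * (a : ℝ) + b)]
  · have hd4 : ¬ 2 * 2 ∣ d := fun h4 => by
      have := Int.isUnit_iff.mp (hsf 2 h4)
      omega
    have hd5 : (5 : ℝ) ≤ -d := by exact_mod_cast (by omega : 5 ≤ -d)
    rw [normSq_add_mul_quadOmega_of_emod_four_ne_one hd.le h]
    nlinarith [sq_nonneg (a : ℝ)]

theorem intCast_mem_of_normSq_le_four {a : ℤ} (h : Complex.normSq a ≤ 4) :
    (a : ℂ) ∈ ({0, 1, -1, 2, -2} : Set ℂ) := by
  rw [Complex.normSq_intCast] at h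
  have ha : a * a ≤ 4 := by exact_mod_cast h
  obtain ⟨h₁, h₂⟩ : -2 ≤ a ∧ a ≤ 2 := ⟨by nlinarith, by nlinarith⟩
  interval_cases a <;> norm_num

theorem InIntRing.mem_of_normSq_le_four {d : ℤ} (hd : d < 0) (hsf : Squarefree d)
    (hne : d ∉ ({-1, -2, -3, -7, -11, -15} : Set ℤ)) {x : ℂ} (hx : InIntRing d x)
    (h : Complex.normSq x ≤ 4) : x ∈ ({0, 1, -1, 2, -2} : Set ℂ) := by
  obtain ⟨a, b, rfl⟩ := hx
  obtain rfl | hb := eq_or_ne b 0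
  · simp only [Int.cast_zero, zero_mul, add_zero] at h ⊢
    exact intCast_mem_of_normSq_le_four h
  · exact absurd h (four_lt_normSq_add_mul_quadOmega hd hsf hne a hb).not_ge

namespace Matrix

theorem norm_apply_le_l2_opNorm {𝕜 m n : Type*} [RCLike 𝕜] [Fintype m] [Fintype n]
    [DecidableEq n] (A : Matrix m n 𝕜) (i : m) (j : n) : ‖A i j‖ ≤ ‖A‖ := by
  have h := A.l2_opNorm_mulVec (EuclideanSpace.single j 1)
  rw [PiLp.norm_single, norm_one, mul_one] at h
  refine le_trans (le_of_eq ?_) ((PiLp.norm_apply_le _ i).trans h)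
  simp

theorem IsHermitian.norm_apply_le_of_spectrum {n : Type*} [Fintype n] [DecidableEq n]
    {A : Matrix n n ℂ} (hA : A.IsHermitian) {r : NNReal}
    (hr : ∀ μ ∈ spectrum ℂ A, ‖μ‖₊ ≤ r) (i j : n) : ‖A i j‖ ≤ r := by
  have hnorm : ‖A‖₊ ≤ r := by
    rw [← ENNReal.coe_le_coe, ← hA.isSelfAdjoint.spectralRadius_eq_nnnorm]
    exact iSup₂_le fun μ hμ => ENNReal.coe_le_coe.mpr (hr μ hμ)
  exact (norm_apply_le_l2_opNorm A i j).trans hnorm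

end Matrix

theorem IsCycloMat.normSq_apply_le_four {n : ℕ} {A : Matrix (Fin n) (Fin n) ℂ}
    (hA : A.IsHermitian) (hc : IsCycloMat A) (i j : Fin n) : Complex.normSq (A i j) ≤ 4 := by
  have h := hA.norm_apply_le_of_spectrum (r := 2) (fun μ hμ => by
    obtain ⟨t, rfl, ht₁, ht₂⟩ := hc μ hμ
    rw [← NNReal.coe_le_coe, coe_nnnorm, Complex.norm_real, Real.norm_eq_abs]
    exact abs_le.mpr ⟨ht₁, ht₂⟩) i j
  have h₂ : ‖A i j‖ ≤ 2 := mod_cast h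
  rw [Complex.normSq_eq_norm_sq]
  nlinarith [norm_nonneg (A i j)]

/-- For squarefree negative `d ∉ {-1, -2, -3, -7, -11, -15}`, every element of the
ring of integers of `ℚ(√d)` of norm at most 4 lies in `{0, 1, -1, 2, -2}`;
consequently every cyclotomic Hermitian matrix over this ring is a symmetric matrix
with entries in `{0, 1, -1, 2, -2}`. -/
theorem small_norm_elements_are_rational_integers
    (d : ℤ) (hd : d < 0) (hsf : Squarefree d)
    (hne : d ∉ ({-1, -2, -3, -7, -11, -15} : Set ℤ)) :
    (∀ x : ℂ, InIntRing d x → Complex.normSq x ≤ 4 →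
        x ∈ ({0, 1, -1, 2, -2} : Set ℂ)) ∧
      (∀ (n : ℕ) (A : Matrix (Fin n) (Fin n) ℂ), A.IsHermitian →
        (∀ i j, InIntRing d (A i j)) → IsCycloMat A →
        A.transpose = A ∧ ∀ i j, A i j ∈ ({0, 1, -1, 2, -2} : Set ℂ)) := by
  have hsmall : ∀ x : ℂ, InIntRing d x → Complex.normSq x ≤ 4 →
      x ∈ ({0, 1, -1, 2, -2} : Set ℂ) := fun _ => InIntRing.mem_of_normSq_le_four hd hsf hne
  refine ⟨hsmall, fun n A hA hint hc => ?_⟩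
  have hmem : ∀ i j, A i j ∈ ({0, 1, -1, 2, -2} : Set ℂ) := fun i j =>
    hsmall _ (hint i j) (hc.normSq_apply_le_four hA i j)
  refine ⟨Matrix.ext fun i j => ?_, hmem⟩
  rw [Matrix.transpose_apply, ← hA.apply i j]
  obtain h | h | h | h | h := hmem j i <;> simp [show A j i = _ from h]
end

section
/- Let d be a squarefree negative integer with d ≠ -1 and d ≠ -3. If A is an R-matrix over O_{ℚ(√d)} having an off-diagonal entry A_{ij} (i ≠ j) with norm |A_{ij}|² ≥ 5, then M(A) > 1.3 (indeed M(A) ≥ 2.36). -/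
open Polynomial

/-!
The diagonal entries `a, b` of `A` at `i, j` are real elements of `O_{ℚ(√d)}`, hence integers.
By the Rayleigh quotient, the extreme eigenvalues of `A` lie outside those of the principal
`2 × 2` block at `{i, j}`, namely `(a + b ± √((a - b)² + 4|A i j|²)) / 2`, whose spread is at
least `√20`. Every eigenvalue `μ` of `A` gives a root `z` of `R_A` with `z + z⁻¹ = μ` and
`|z| ≥ 1`, and `|z| ≥ q` as soon as `|μ| ≥ q + q⁻¹`. If `a + b ≠ 0`, one extreme eigenvalue has
absolute value at least `2.36 + 2.36⁻¹` (for `|a + b| = 1` because `a - b` is then odd); if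
`a + b = 0`, both have absolute value at least `√5 ≥ 1.61 + 1.61⁻¹`, and `1.61² ≥ 2.36`.
-/

open Polynomial Matrix WithLp

section Rayleigh

variable {𝕜 E : Type*} [RCLike 𝕜] [NormedAddCommGroup E] [InnerProductSpace 𝕜 E]
  [FiniteDimensional 𝕜 E]

theorem LinearMap.IsSymmetric.exists_hasEigenvalue_le_rayleigh_le {T : E →ₗ[𝕜] E}
    (hT : T.IsSymmetric) {x : E} (hx : x ≠ 0) :
    ∃ μ₁ μ₂ : ℝ, Module.End.HasEigenvalue T μ₁ ∧ Module.End.HasEigenvalue T μ₂ ∧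
      μ₁ ≤ RCLike.re (inner 𝕜 (T x) x) / ‖x‖ ^ 2 ∧
      RCLike.re (inner 𝕜 (T x) x) / ‖x‖ ^ 2 ≤ μ₂ := by
  have : Nontrivial E := ⟨⟨x, 0, hx⟩⟩
  set R : {y : E // y ≠ 0} → ℝ := fun y => RCLike.re (inner 𝕜 (T y) y) / ‖(y : E)‖ ^ 2
  have hR : ∀ y, |R y| ≤ ‖LinearMap.toContinuousLinearMap T‖ := fun y =>
    (LinearMap.toContinuousLinearMap T).rayleighQuotient_le_norm y
  refine ⟨_, _, hT.hasEigenvalue_iInf_of_finiteDimensional,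
    hT.hasEigenvalue_iSup_of_finiteDimensional, ciInf_le (f := R) ?_ ⟨x, hx⟩,
    le_ciSup (f := R) ?_ ⟨x, hx⟩⟩
  · exact ⟨_, Set.forall_mem_range.mpr fun y => neg_le_of_abs_le (hR y)⟩
  · exact ⟨_, Set.forall_mem_range.mpr fun y => le_of_abs_le (hR y)⟩

end Rayleigh

namespace Matrix

variable {𝕜 n : Type*} [RCLike 𝕜] [Fintype n]

theorem star_dotProduct_mulVec_eq_of_forall_ne_zero {A : Matrix n n 𝕜} {w : n → 𝕜} {c : 𝕜}
    (h : ∀ p, w p ≠ 0 → (A *ᵥ w) p = c * w p) :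
    star w ⬝ᵥ (A *ᵥ w) = c * (star w ⬝ᵥ w) := by
  simp only [dotProduct, Finset.mul_sum]
  refine Finset.sum_congr rfl fun p _ => ?_
  by_cases hp : w p = 0
  · simp [hp]
  · rw [h p hp]; ring

variable [DecidableEq n] {A : Matrix n n 𝕜}

theorem IsHermitian.exists_isRoot_charpoly_le_and_ge (hA : A.IsHermitian) {w : n → 𝕜}
    (hw : w ≠ 0) {c : ℝ} (hc : star w ⬝ᵥ (A *ᵥ w) = c * (star w ⬝ᵥ w)) :
    ∃ μ₁ μ₂ : ℝ, A.charpoly.IsRoot μ₁ ∧ A.charpoly.IsRoot μ₂ ∧ μ₁ ≤ c ∧ c ≤ μ₂ := by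
  set x : EuclideanSpace 𝕜 n := toLp 2 w
  have hx : x ≠ 0 := by simpa [x] using hw
  have hT := isSymmetric_toEuclideanLin_iff.mpr hA
  have hrayleigh : RCLike.re (inner 𝕜 (toEuclideanLin A x) x) / ‖x‖ ^ 2 = c := by
    have h : inner 𝕜 (toEuclideanLin A x) x = c * inner 𝕜 x x := by
      rw [hT, EuclideanSpace.inner_eq_star_dotProduct, EuclideanSpace.inner_eq_star_dotProduct]
      simpa [x, toLpLin_apply, dotProduct_comm] using hc
    rw [h, inner_self_eq_norm_sq_to_K, ← RCLike.ofReal_pow, ← RCLike.ofReal_mul, RCLike.ofReal_re,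
      mul_div_cancel_right₀ _ (by positivity)]
  have hroot : ∀ μ : ℝ, Module.End.HasEigenvalue (toEuclideanLin A) μ → A.charpoly.IsRoot μ :=
    fun μ hμ => mem_spectrum_iff_isRoot_charpoly.mp (spectrum_toLpLin (A := A) 2 ▸ hμ.mem_spectrum)
  obtain ⟨μ₁, μ₂, h₁, h₂, hle, hge⟩ := hT.exists_hasEigenvalue_le_rayleigh_le hx
  exact ⟨μ₁, μ₂, hroot μ₁ h₁, hroot μ₂ h₂, hrayleigh ▸ hle, hrayleigh ▸ hge⟩

/-- `hl` says that `l` is an eigenvalue of the principal block `!![a, A i j; star (A i j), b]`;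
the test vector is its eigenvector `(A i j, l - a)` placed at `i, j`. -/
theorem IsHermitian.exists_isRoot_charpoly_le_and_ge_of_block_eigenvalue (hA : A.IsHermitian)
    {i j : n} (hij : i ≠ j) (hAij : A i j ≠ 0) {a b : ℝ} (ha : A i i = a) (hb : A j j = b)
    {l : ℝ} (hl : l ^ 2 - (a + b) * l + a * b = ‖A i j‖ ^ 2) :
    ∃ μ₁ μ₂ : ℝ, A.charpoly.IsRoot μ₁ ∧ A.charpoly.IsRoot μ₂ ∧ μ₁ ≤ l ∧ l ≤ μ₂ := by
  set w : n → 𝕜 := Pi.single i (A i j) + Pi.single j ((l - a : ℝ) : 𝕜)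
  have hwi : w i = A i j := by simp [w, hij]
  have hwj : w j = (l - a : ℝ) := by simp [w, hij.symm]
  have hAw : ∀ p, (A *ᵥ w) p = A p i * A i j + A p j * (l - a : ℝ) := by
    intro p; simp [w, mulVec_add, mul_comm]
  have hji : A j i = star (A i j) := by rw [← hA.apply j i]
  have hw : w ≠ 0 := fun hw => hAij (hwi ▸ congrFun hw i)
  refine hA.exists_isRoot_charpoly_le_and_ge hw (star_dotProduct_mulVec_eq_of_forall_ne_zero ?_)
  intro p hp
  rcases eq_or_ne p i with rfl | hpi
  · rw [hAw, ha, hwi]; push_cast; ring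
  rcases eq_or_ne p j with rfl | hpj
  · rw [hAw, hb, hwj, hji, mul_comm (star _), RCLike.star_def, RCLike.mul_conj,
      ← RCLike.ofReal_pow, ← hl]
    push_cast; ring
  · exact absurd (by simp [w, hpi, hpj]) hp

theorem IsHermitian.exists_isRoot_charpoly_outside_block_spectrum (hA : A.IsHermitian)
    {i j : n} (hij : i ≠ j) (hAij : A i j ≠ 0) {a b : ℝ} (ha : A i i = a) (hb : A j j = b) :
    ∃ μ₁ μ₂ : ℝ, A.charpoly.IsRoot μ₁ ∧ A.charpoly.IsRoot μ₂ ∧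
      μ₁ ≤ (a + b - √((a - b) ^ 2 + 4 * ‖A i j‖ ^ 2)) / 2 ∧
      (a + b + √((a - b) ^ 2 + 4 * ‖A i j‖ ^ 2)) / 2 ≤ μ₂ := by
  have hΔ := Real.sq_sqrt (by positivity : 0 ≤ (a - b) ^ 2 + 4 * ‖A i j‖ ^ 2)
  obtain ⟨μ₁, -, h₁, -, hμ₁, -⟩ :=
    hA.exists_isRoot_charpoly_le_and_ge_of_block_eigenvalue hij hAij ha hb
      (l := (a + b - √((a - b) ^ 2 + 4 * ‖A i j‖ ^ 2)) / 2) (by linear_combination hΔ / 4)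
  obtain ⟨-, μ₂, -, h₂, -, hμ₂⟩ :=
    hA.exists_isRoot_charpoly_le_and_ge_of_block_eigenvalue hij hAij ha hb
      (l := (a + b + √((a - b) ^ 2 + 4 * ‖A i j‖ ^ 2)) / 2) (by linear_combination hΔ / 4)
  exact ⟨μ₁, μ₂, h₁, h₂, hμ₁, hμ₂⟩

end Matrix

theorem Complex.exists_one_le_norm_add_inv_eq (w : ℂ) : ∃ z : ℂ, 1 ≤ ‖z‖ ∧ z + z⁻¹ = w := by
  obtain ⟨s, hs⟩ := IsAlgClosed.exists_eq_mul_self (w ^ 2 / 4 - 1)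
  have hprod : (w / 2 + s) * (w / 2 - s) = 1 := by linear_combination hs
  have key : ∀ z z' : ℂ, z * z' = 1 → z + z' = w → 1 ≤ ‖z‖ → ∃ z : ℂ, 1 ≤ ‖z‖ ∧ z + z⁻¹ = w :=
    fun z z' h hw hz => ⟨z, hz, by rw [inv_eq_of_mul_eq_one_right h, hw]⟩
  have hnorm : ‖w / 2 + s‖ * ‖w / 2 - s‖ = 1 := by rw [← norm_mul, hprod, norm_one]
  rcases le_total 1 ‖w / 2 + s‖ with h | h
  · exact key _ _ hprod (by ring) h
  · exact key _ _ ((mul_comm _ _).trans hprod) (by ring) (by nlinarith [norm_nonneg (w / 2 - s)])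

theorem le_of_add_inv_le_add_inv {q t : ℝ} (hq : 1 ≤ q) (ht : 1 ≤ t) (h : q + q⁻¹ ≤ t + t⁻¹) :
    q ≤ t := by
  by_contra! hlt
  have hdiff : q + q⁻¹ - (t + t⁻¹) = (q - t) * (q * t - 1) / (q * t) := by field_simp; ring
  have : 0 < q + q⁻¹ - (t + t⁻¹) := by
    rw [hdiff]
    exact div_pos (mul_pos (by linarith) (by nlinarith)) (by positivity)
  linarith

theorem le_norm_of_add_inv_eq {q : ℝ} {z : ℂ} (hq : 1 ≤ q) (hz : 1 ≤ ‖z‖)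
    (h : q + q⁻¹ ≤ ‖z + z⁻¹‖) : q ≤ ‖z‖ :=
  le_of_add_inv_le_add_inv hq hz (h.trans ((norm_add_le _ _).trans_eq (by rw [norm_inv])))

theorem assocRecip_eval {n : ℕ} {g : ℂ[X]} (hg : g.natDegree ≤ n) {z : ℂ} (hz : z ≠ 0) :
    (assocRecip n g).eval z = z ^ n * g.eval (z + z⁻¹) := by
  rw [assocRecip, eval_finsetSum, eval_eq_sum_range' (Nat.lt_succ_of_le hg), Finset.mul_sum]
  refine Finset.sum_congr rfl fun k hk => ?_
  have hkn : k ≤ n := Nat.lt_succ_iff.mp (Finset.mem_range.mp hk)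
  rw [show z ^ n = z ^ (n - k) * z ^ k by rw [← pow_add, Nat.sub_add_cancel hkn],
    show z + z⁻¹ = (z ^ 2 + 1) / z by field_simp]
  simp only [eval_mul, eval_pow, eval_add, eval_C, eval_X, eval_one, div_pow]
  field_simp

theorem assocRecip_ne_zero {n : ℕ} {g : ℂ[X]} (hg : g.natDegree ≤ n) (hg0 : g ≠ 0) :
    assocRecip n g ≠ 0 := by
  refine fun h => hg0 (Polynomial.funext fun w => ?_)
  obtain ⟨z, hz, rfl⟩ := Complex.exists_one_le_norm_add_inv_eq w
  have hz0 : z ≠ 0 := norm_pos_iff.mp (one_pos.trans_le hz)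
  have := assocRecip_eval hg hz0
  rw [h, eval_zero, eq_comm, mul_eq_zero] at this
  simpa using this.resolve_left (pow_ne_zero _ hz0)

theorem exists_isRoot_assocRecip {n : ℕ} {g : ℂ[X]} (hg : g.natDegree ≤ n) {w : ℂ}
    (hw : g.IsRoot w) : ∃ z : ℂ, (assocRecip n g).IsRoot z ∧ 1 ≤ ‖z‖ ∧ z + z⁻¹ = w := by
  obtain ⟨z, hz, rfl⟩ := Complex.exists_one_le_norm_add_inv_eq w
  refine ⟨z, ?_, hz, rfl⟩
  rw [IsRoot, assocRecip_eval hg (norm_pos_iff.mp (one_pos.trans_le hz)), hw.eq_zero, mul_zero]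

theorem prod_le_mahlerMeasurePoly {P : ℂ[X]} {s : Multiset ℂ} (hs : s ≤ P.roots) :
    (s.map fun z => max 1 ‖z‖).prod ≤ mahlerMeasurePoly P := by
  obtain ⟨t, ht⟩ := Multiset.le_iff_exists_add.mp hs
  rw [mahlerMeasurePoly, ht, Multiset.map_add, Multiset.prod_add]
  exact le_mul_of_one_le_right (Multiset.prod_map_nonneg fun z _ => by positivity)
    (Multiset.one_le_prod_map fun z _ => le_max_left _ _)

section mahlerMat

variable {n : ℕ} {A : Matrix (Fin n) (Fin n) ℂ}

theorem exists_isRoot_assocRecip_charpoly {μ : ℂ} (hμ : A.charpoly.IsRoot μ) :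
    ∃ z ∈ (assocRecip n A.charpoly).roots, 1 ≤ ‖z‖ ∧ z + z⁻¹ = μ := by
  have hdeg : A.charpoly.natDegree ≤ n := by
    rw [Matrix.charpoly_natDegree_eq_dim, Fintype.card_fin]
  obtain ⟨z, hz, h⟩ := exists_isRoot_assocRecip hdeg hμ
  exact ⟨z, (mem_roots (assocRecip_ne_zero hdeg A.charpoly_monic.ne_zero)).mpr hz, h⟩

theorem le_mahlerMat_of_isRoot_charpoly {μ : ℂ} (hμ : A.charpoly.IsRoot μ) {q : ℝ} (hq : 1 ≤ q)
    (hqμ : q + q⁻¹ ≤ ‖μ‖) : q ≤ mahlerMat A := by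
  obtain ⟨z, hz, hz1, rfl⟩ := exists_isRoot_assocRecip_charpoly hμ
  calc q ≤ max 1 ‖z‖ := (le_norm_of_add_inv_eq hq hz1 hqμ).trans (le_max_right _ _)
    _ = (({z} : Multiset ℂ).map fun z => max 1 ‖z‖).prod := by simp
    _ ≤ mahlerMat A := prod_le_mahlerMeasurePoly (Multiset.singleton_le.mpr hz)

theorem mul_le_mahlerMat_of_isRoot_charpoly {μ₁ μ₂ : ℂ} (hne : μ₁ ≠ μ₂)
    (h₁ : A.charpoly.IsRoot μ₁) (h₂ : A.charpoly.IsRoot μ₂) {q₁ q₂ : ℝ} (hq₁ : 1 ≤ q₁)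
    (hq₂ : 1 ≤ q₂) (hqμ₁ : q₁ + q₁⁻¹ ≤ ‖μ₁‖) (hqμ₂ : q₂ + q₂⁻¹ ≤ ‖μ₂‖) :
    q₁ * q₂ ≤ mahlerMat A := by
  obtain ⟨z₁, hz₁, hz₁1, rfl⟩ := exists_isRoot_assocRecip_charpoly h₁
  obtain ⟨z₂, hz₂, hz₂1, rfl⟩ := exists_isRoot_assocRecip_charpoly h₂
  have hz : z₁ ≠ z₂ := by rintro rfl; exact hne rfl
  have hs : ({z₁, z₂} : Multiset ℂ) ≤ (assocRecip n A.charpoly).roots :=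
    (Multiset.le_iff_subset (by simpa using hz)).mpr
      (by simp [Multiset.insert_eq_cons, Multiset.cons_subset, hz₁, hz₂])
  calc q₁ * q₂ ≤ max 1 ‖z₁‖ * max 1 ‖z₂‖ :=
        mul_le_mul ((le_norm_of_add_inv_eq hq₁ hz₁1 hqμ₁).trans (le_max_right _ _))
          ((le_norm_of_add_inv_eq hq₂ hz₂1 hqμ₂).trans (le_max_right _ _))
          (by linarith) (by positivity)
    _ = (({z₁, z₂} : Multiset ℂ).map fun z => max 1 ‖z‖).prod := by simp
    _ ≤ mahlerMat A := prod_le_mahlerMeasurePoly hs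

end mahlerMat

theorem quadOmega_im_pos {d : ℤ} (hd : d < 0) : 0 < (quadOmega d).im := by
  have h : (0 : ℝ) < √(-d : ℝ) := Real.sqrt_pos.mpr (by exact_mod_cast neg_pos.mpr hd)
  unfold quadOmega
  split_ifs <;> simpa [Complex.div_im] using h

theorem InIntRing.exists_int_eq_of_im_eq_zero {d : ℤ} (hd : d < 0) {x : ℂ} (hx : InIntRing d x)
    (him : x.im = 0) : ∃ a : ℤ, x = a := by
  obtain ⟨a, b, rfl⟩ := hx
  have hb : (b : ℝ) * (quadOmega d).im = 0 := by simpa using him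
  have hb0 : b = 0 := by exact_mod_cast (mul_eq_zero.mp hb).resolve_right (quadOmega_im_pos hd).ne'
  exact ⟨a, by simp [hb0]⟩

theorem two_mul_add_inv_le_abs_add_sqrt (a b : ℤ) (hab : a + b ≠ 0) {N : ℝ} (hN : 5 ≤ N) :
    2 * (2.36 + 2.36⁻¹) ≤ |(a + b : ℝ)| + √((a - b) ^ 2 + 4 * N) := by
  rcases le_or_gt 2 |a + b| with hs | hs
  · have hΔ : 4.47 ≤ √((a - b) ^ 2 + 4 * N) :=
      Real.le_sqrt_of_sq_le (by nlinarith [sq_nonneg ((a : ℝ) - b)])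
    have : (2 : ℝ) ≤ |(a + b : ℝ)| := by exact_mod_cast hs
    norm_num; linarith
  · have hs1 : |a + b| = 1 := by have := abs_pos.mpr hab; omega
    -- `a - b` has the parity of `a + b`, so it is odd
    have hodd : 1 ≤ (a - b) ^ 2 := by
      have : a - b ≠ 0 := by rcases (abs_eq zero_le_one).mp hs1 with h | h <;> omega
      nlinarith [Int.one_le_abs this, sq_abs (a - b)]
    have hΔ : 4.58 ≤ √((a - b) ^ 2 + 4 * N) := by
      refine Real.le_sqrt_of_sq_le ?_
      have : (1 : ℝ) ≤ (a - b) ^ 2 := by exact_mod_cast hodd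
      nlinarith
    have : |(a + b : ℝ)| = 1 := by exact_mod_cast hs1
    norm_num; linarith

theorem le_mahlerMat_of_outside_block_spectrum {n : ℕ} {A : Matrix (Fin n) (Fin n) ℂ}
    {μ₁ μ₂ : ℝ} (h₁ : A.charpoly.IsRoot μ₁) (h₂ : A.charpoly.IsRoot μ₂) (a b : ℤ) {N : ℝ}
    (hN : 5 ≤ N) (hμ₁ : μ₁ ≤ (a + b - √((a - b) ^ 2 + 4 * N)) / 2)
    (hμ₂ : (a + b + √((a - b) ^ 2 + 4 * N)) / 2 ≤ μ₂) :
    2.36 ≤ mahlerMat A := by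
  have hnorm : ∀ μ : ℝ, ‖(μ : ℂ)‖ = |μ| := fun μ => by rw [Complex.norm_real, Real.norm_eq_abs]
  rcases eq_or_ne (a + b) 0 with hs | hs
  · have hsR : (a + b : ℝ) = 0 := by exact_mod_cast hs
    have hΔ : 4.47 ≤ √((a - b) ^ 2 + 4 * N) :=
      Real.le_sqrt_of_sq_le (by nlinarith [sq_nonneg ((a : ℝ) - b)])
    have hq : (1.61 : ℝ) + 1.61⁻¹ ≤ 2.235 := by norm_num
    have := mul_le_mahlerMat_of_isRoot_charpoly (by exact_mod_cast (by linarith : μ₁ ≠ μ₂)) h₁ h₂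
      (q₁ := 1.61) (q₂ := 1.61) (by norm_num) (by norm_num)
      (by rw [hnorm, abs_of_neg (by linarith)]; linarith)
      (by rw [hnorm, abs_of_pos (by linarith)]; linarith)
    linarith
  have hspread := two_mul_add_inv_le_abs_add_sqrt a b hs hN
  rcases le_or_gt 0 (a + b : ℝ) with hpos | hneg
  · refine le_mahlerMat_of_isRoot_charpoly h₂ (by norm_num) ?_
    rw [abs_of_nonneg hpos] at hspread
    rw [hnorm]
    linarith [le_abs_self μ₂]
  · refine le_mahlerMat_of_isRoot_charpoly h₁ (by norm_num) ?_
    rw [abs_of_neg hneg] at hspread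
    rw [hnorm]
    linarith [neg_le_abs μ₁]

theorem large_offdiagonal_entry_mahler_bound_general
    (d : ℤ) (hd : d < 0)
    (n : ℕ) (A : Matrix (Fin n) (Fin n) ℂ) (hA : A.IsHermitian)
    (hent : ∀ i j, InIntRing d (A i j))
    (i j : Fin n) (hij : i ≠ j) (h5 : 5 ≤ Complex.normSq (A i j)) :
    1.3 < mahlerMat A ∧ 2.36 ≤ mahlerMat A := by
  have hdiag : ∀ k, ∃ a : ℤ, A k k = a := fun k =>
    (hent k k).exists_int_eq_of_im_eq_zero hd (Complex.conj_eq_iff_im.mp (hA.apply k k))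
  obtain ⟨a, ha⟩ := hdiag i
  obtain ⟨b, hb⟩ := hdiag j
  rw [Complex.normSq_eq_norm_sq] at h5
  have hAij : A i j ≠ 0 := fun h => by norm_num [h] at h5
  obtain ⟨μ₁, μ₂, h₁, h₂, hμ₁, hμ₂⟩ :=
    hA.exists_isRoot_charpoly_outside_block_spectrum hij hAij (a := a) (b := b)
      (by simpa using ha) (by simpa using hb)
  have hM := le_mahlerMat_of_outside_block_spectrum h₁ h₂ a b h5 hμ₁ hμ₂
  exact ⟨by linarith, hM⟩

/-- An `R`-matrix with an off-diagonal entry of norm at least 5 has Mahler measure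
greater than 1.3; indeed at least 2.36. -/
theorem large_offdiagonal_entry_mahler_bound
    (d : ℤ) (hd : d < 0) (hsf : Squarefree d) (hd1 : d ≠ -1) (hd3 : d ≠ -3)
    (n : ℕ) (A : Matrix (Fin n) (Fin n) ℂ) (hA : A.IsHermitian)
    (hent : ∀ i j, InIntRing d (A i j))
    (i j : Fin n) (hij : i ≠ j) (h5 : 5 ≤ Complex.normSq (A i j)) :
    1.3 < mahlerMat A ∧ 2.36 ≤ mahlerMat A :=
  large_offdiagonal_entry_mahler_bound_general d hd n A hA hent i j hij h5
end
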